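/- Let E₁ ⊆ E₂ be sets of relational variables. For any assignment χ₁ : E₁ → {0,1} satisfying all transitivity constraints over E₁, there exists an assignment χ₂ : E₂ → {0,1} extending χ₁ on E₁ that satisfies all transitivity constraints over E₂. -/

import Mathlib

/-- The list of edges of the cycle determined by vertex list `l = [i₁,…,i_k]`:
successive pairs plus the closing edge `(i_k, i₁)`. -/
def cycEdges (l : List ℕ) : List (ℕ × ℕ) := l.zip (l.rotate 1)

/-- `l` is (the vertex list of) a cycle in the graph `G(E)`. -/
def IsCycle (E : ℕ → ℕ → Prop) (l : List ℕ) : Prop :=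
  3 ≤ l.length ∧ ∀ p ∈ cycEdges l, E p.1 p.2

/-- The number of 0-edges of the cycle `l` under the labeling `χ`. -/
def numZeroEdges (χ : ℕ → ℕ → Bool) (l : List ℕ) : ℕ :=
  ((cycEdges l).filter (fun p => !χ p.1 p.2)).length

/-- The assignment `χ` violates some transitivity constraint
`e_{[i₁,i₂]} ∧ ⋯ ∧ e_{[i_{k-1},i_k]} ⇒ e_{[i₁,i_k]}` over `E`. -/
def ViolatesTrans (E : ℕ → ℕ → Prop) (χ : ℕ → ℕ → Bool) : Prop :=
  ∃ l : List ℕ, 3 ≤ l.length ∧ l.Chain' E ∧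
    (∀ p ∈ l.zip l.tail, χ p.1 p.2 = true) ∧
    E (l.headD 0) (l.getLastD 0) ∧ χ (l.headD 0) (l.getLastD 0) = false

/-- The simple cycle (or acyclic path) `l` has a chord: an edge of `G(E)` joining two
vertices at positions `p < q` that are not adjacent in the cycle. -/
def HasChord (E : ℕ → ℕ → Prop) (l : List ℕ) : Prop :=
  ∃ p q : ℕ, p < q ∧ q < l.length ∧ p + 1 < q ∧ ¬(p = 0 ∧ q = l.length - 1) ∧
    E (l.getD p 0) (l.getD q 0)

/-- `χ` satisfies all transitivity constraints over `E`: no cycle of the labeled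
graph `G(E,χ)` has exactly one 0-edge. -/
def SatisfiesTrans (E : ℕ → ℕ → Prop) (χ : ℕ → ℕ → Bool) : Prop :=
  ¬ ∃ l : List ℕ, IsCycle E l ∧ numZeroEdges χ l = 1

/-!
Label an edge `1` exactly when its endpoints are joined by a path of `1`-edges of
`G(E₁, χ₁)`. This is an equivalence relation, so no cycle can carry exactly one `0`-edge:
the remaining edges of the cycle join the endpoints of that edge. The new labeling agrees
with `χ₁` on `E₁`, since a `0`-edge of `E₁` whose endpoints are joined by a path of `1`-edges
would close a cycle of `G(E₁, χ₁)` with exactly one `0`-edge.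
-/

open Relation

theorem List.isChain_cons_iff_forall_mem_zip {α : Type*} {R : α → α → Prop} {a : α}
    {c : List α} : (a :: c).IsChain R ↔ ∀ p ∈ (a :: c).zip c, R p.1 p.2 := by
  induction c generalizing a with
  | nil => simp
  | cons b s ih => simp [List.isChain_cons_cons, ih]

lemma List.zip_cons_append_singleton {α : Type*} (a b : α) (c : List α) :
    (a :: c).zip (c ++ [b]) = (a :: c).zip c ++ [(c.getLastD a, b)] := by
  induction c generalizing a with
  | nil => simp
  | cons d s ih =>
    simp only [List.cons_append, List.zip_cons_cons, ih, List.getLastD_cons]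

lemma cycEdges_cons (a : ℕ) (c : List ℕ) :
    cycEdges (a :: c) = (a :: c).zip c ++ [(c.getLastD a, a)] := by
  rw [cycEdges, List.rotate_cons_succ, List.rotate_zero, List.zip_cons_append_singleton]

lemma length_cycEdges (l : List ℕ) : (cycEdges l).length = l.length := by
  simp [cycEdges]

lemma cycEdges_rotate (l : List ℕ) (n : ℕ) :
    cycEdges (l.rotate n) = (cycEdges l).rotate n := by
  apply List.ext_getElem
  · simp [length_cycEdges]
  intro i _ _
  simp only [cycEdges, List.getElem_rotate, List.getElem_zip, List.rotate_rotate,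
    List.length_zip, List.length_rotate, Nat.min_self, Nat.mod_add_mod, Nat.add_assoc]

lemma numZeroEdges_rotate (χ : ℕ → ℕ → Bool) (l : List ℕ) (n : ℕ) :
    numZeroEdges χ (l.rotate n) = numZeroEdges χ l := by
  rw [numZeroEdges, numZeroEdges, cycEdges_rotate]
  exact ((List.rotate_perm _ n).filter _).length_eq

lemma numZeroEdges_cons (χ : ℕ → ℕ → Bool) (a : ℕ) (c : List ℕ) :
    numZeroEdges χ (a :: c) =
      (((a :: c).zip c).filter (fun p => !χ p.1 p.2)).length + (!χ (c.getLastD a) a).toNat := by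
  rw [numZeroEdges, cycEdges_cons, List.filter_append, List.length_append, List.filter_singleton]
  cases χ (c.getLastD a) a <;> rfl

lemma exists_rotate_eq_cons_of_mem_cycEdges {l : List ℕ} {p : ℕ × ℕ} (hp : p ∈ cycEdges l) :
    ∃ n a c, l.rotate n = a :: c ∧ (c.getLastD a, a) = p := by
  obtain ⟨t, ht, rfl⟩ := List.getElem_of_mem hp
  rw [length_cycEdges] at ht
  obtain ⟨a, c, hac⟩ := List.exists_cons_of_ne_nil
    (List.rotate_eq_nil_iff.not.2 (List.ne_nil_of_length_pos (by omega)) : l.rotate (t + 1) ≠ [])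
  have hlen : c.length + 1 = l.length := by rw [← List.length_rotate l (t + 1), hac]; rfl
  have hcyc := congrArg cycEdges hac
  rw [cycEdges_rotate, cycEdges_cons] at hcyc
  refine ⟨t + 1, a, c, hac, ?_⟩
  have := List.getElem_of_eq hcyc.symm (i := c.length) (by simp)
  rw [List.getElem_concat_length (by simp)] at this
  rw [this, List.getElem_rotate]
  simp only [length_cycEdges, show c.length + (t + 1) = t + l.length by omega, Nat.add_mod_right,
    Nat.mod_eq_of_lt ht]

theorem satisfiesTrans_decide_of_equivalence (E : ℕ → ℕ → Prop) {R : ℕ → ℕ → Prop}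
    [DecidableRel R] (hR : Equivalence R) : SatisfiesTrans E (fun i j => decide (R i j)) := by
  rintro ⟨l, -, hone⟩
  obtain ⟨p, hp⟩ := List.length_eq_one_iff.mp hone
  obtain ⟨hpl, hpR⟩ := List.mem_filter.1 (hp ▸ List.mem_singleton_self p)
  -- rotate the cycle so that its only `0`-edge `p` becomes the closing edge
  obtain ⟨n, a, c, hrot, rfl⟩ := exists_rotate_eq_cons_of_mem_cycEdges hpl
  replace hpR : ¬ R (c.getLastD a) a := by simpa using hpR
  rw [← numZeroEdges_rotate _ _ n, hrot, numZeroEdges_cons] at hone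
  rw [show (!decide (R (c.getLastD a) a)).toNat = 1 by rw [decide_eq_false hpR]; rfl,
    Nat.add_eq_right, List.length_eq_zero_iff, List.filter_eq_nil_iff] at hone
  have hpath : ∀ q ∈ (a :: c).zip c, R q.1 q.2 := fun q hq => by simpa using hone q hq
  have := List.relationReflTransGen_of_exists_isChain_cons c
    (List.isChain_cons_iff_forall_mem_zip.2 hpath) (List.getLast_eq_getLastD ..)
  exact hpR (hR.symm (reflTransGen_le_of_equivalence_of_le hR le_rfl _ _ this))

def OneEdge (E : ℕ → ℕ → Prop) (χ : ℕ → ℕ → Bool) (i j : ℕ) : Prop :=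
  E i j ∧ χ i j = true

lemma equivalence_reflTransGen_oneEdge {E : ℕ → ℕ → Prop} {χ : ℕ → ℕ → Bool}
    [Std.Symm E] (hχ : ∀ i j, χ i j = χ j i) :
    Equivalence (ReflTransGen (OneEdge E χ)) :=
  have : Std.Symm (OneEdge E χ) := ⟨fun i j h => ⟨symm h.1, (hχ j i).trans h.2⟩⟩
  ⟨fun _ => .refl, fun h => symm h, .trans⟩

theorem SatisfiesTrans.not_reflTransGen_oneEdge {E : ℕ → ℕ → Prop} {χ : ℕ → ℕ → Bool}
    (h : SatisfiesTrans E χ) [Std.Symm E] (hχ : ∀ i j, χ i j = χ j i) {i j : ℕ}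
    (hij : i ≠ j) (hEij : E i j) (hχij : χ i j = false) : ¬ ReflTransGen (OneEdge E χ) i j := by
  intro hconn
  obtain ⟨c, hc, hlast⟩ := List.exists_isChain_cons_of_relationReflTransGen hconn
  rw [List.getLast_eq_getLastD] at hlast
  have hedges := List.isChain_cons_iff_forall_mem_zip.1 hc
  match c, hc, hedges, hlast with
  | [], _, _, hlast => exact hij hlast
  | [x], hc, _, hlast =>
    obtain rfl : x = j := hlast
    simp [OneEdge, hχij] at hc
  | x :: y :: s, _, hedges, hlast =>
    refine h ⟨i :: x :: y :: s, ⟨by simp, fun p hp => ?_⟩, ?_⟩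
    · rw [cycEdges_cons, List.mem_append, List.mem_singleton] at hp
      rcases hp with hp | rfl
      · exact (hedges p hp).1
      · exact hlast ▸ symm hEij
    · rw [numZeroEdges_cons, hlast, hχ, hχij, List.filter_eq_nil_iff.2 fun p hp => by
        simp [(hedges p hp).2]]
      rfl

theorem stmt5_general (N : ℕ) (E₁ E₂ : ℕ → ℕ → Prop)
    (hsym₁ : Symmetric E₁)
    (hsub : ∀ i j, E₁ i j → E₂ i j)
    (hdom : ∀ i j, E₂ i j → i < N ∧ j < N ∧ i ≠ j)
    (χ₁ : ℕ → ℕ → Bool) (hχ₁sym : ∀ i j, χ₁ i j = χ₁ j i)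
    (h₁ : SatisfiesTrans E₁ χ₁) :
    ∃ χ₂ : ℕ → ℕ → Bool, (∀ i j, χ₂ i j = χ₂ j i) ∧
      (∀ i j, E₁ i j → χ₂ i j = χ₁ i j) ∧ SatisfiesTrans E₂ χ₂ := by
  classical
  have : Std.Symm E₁ := ⟨fun _ _ h => hsym₁ h⟩
  have hR : Equivalence (ReflTransGen (OneEdge E₁ χ₁)) :=
    equivalence_reflTransGen_oneEdge hχ₁sym
  refine ⟨fun i j => decide (ReflTransGen (OneEdge E₁ χ₁) i j),
    fun i j => decide_eq_decide.2 ⟨hR.symm, hR.symm⟩, fun i j hE => ?_,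
    satisfiesTrans_decide_of_equivalence E₂ hR⟩
  cases hχ : χ₁ i j
  · exact decide_eq_false
      (h₁.not_reflTransGen_oneEdge hχ₁sym (hdom i j (hsub i j hE)).2.2 hE hχ)
  · exact decide_eq_true (.single ⟨hE, hχ⟩)

theorem stmt5 (N : ℕ) (E₁ E₂ : ℕ → ℕ → Prop)
    (hsym₁ : Symmetric E₁) (hsym₂ : Symmetric E₂)
    (hsub : ∀ i j, E₁ i j → E₂ i j)
    (hdom : ∀ i j, E₂ i j → i < N ∧ j < N ∧ i ≠ j)
    (χ₁ : ℕ → ℕ → Bool) (hχ₁sym : ∀ i j, χ₁ i j = χ₁ j i)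
    (h₁ : SatisfiesTrans E₁ χ₁) :
    ∃ χ₂ : ℕ → ℕ → Bool, (∀ i j, χ₂ i j = χ₂ j i) ∧
      (∀ i j, E₁ i j → χ₂ i j = χ₁ i j) ∧ SatisfiesTrans E₂ χ₂ :=
  stmt5_general N E₁ E₂ hsym₁ hsub hdom χ₁ hχ₁sym h₁
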